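/- Let K: [0,∞) → [0,∞) be a continuous nondecreasing function with K_0 = 0 and K_t → ∞ as t → ∞. Let a, β, σ > 0 with 1/2 < r < 1, and set β_t = aβ(1+K_t)^{−r}, ℓ_t = aσ(1+K_t)^{−r}, Γ_t = exp(∫₀ᵗ β_s dK_s), ⟨L⟩_t = 1 + ∫₀ᵗ Γ_s² ℓ_s² dK_s, and ε_t^{(1)} = 1 + ∫₀ᵗ β_s Γ_s² ⟨L⟩_s^{−1} dK_s. Then: (i) Γ_t² / ( ⟨L⟩_t (1+K_t)^r ) → 2β/(aσ²) as t → ∞; and (ii) ε_t^{(1)} / (1+K_t) → 2β²/σ² as t → ∞. -/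

import Mathlib

open MeasureTheory Set Filter Topology

/-- `Γ_t = exp(∫₀ᵗ β_s dK_s)`. -/
noncomputable def Gam (K : StieltjesFunction ℝ) (β : ℝ → ℝ) (t : ℝ) : ℝ :=
  Real.exp (∫ s in Ioc 0 t, β s ∂K.measure)

/-- `⟨L⟩_t = 1 + ∫₀ᵗ Γ_s² ℓ_s² dK_s`. -/
noncomputable def angL (K : StieltjesFunction ℝ) (β ℓ : ℝ → ℝ) (t : ℝ) : ℝ :=
  1 + ∫ s in Ioc 0 t, (Gam K β s) ^ 2 * ℓ s ^ 2 ∂K.measure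

/-- `ε_t^{(1)} = 1 + ∫₀ᵗ β_s Γ_s² ⟨L⟩_s^{−1} dK_s`. -/
noncomputable def epsOne (K : StieltjesFunction ℝ) (β ℓ : ℝ → ℝ) (t : ℝ) : ℝ :=
  1 + ∫ s in Ioc 0 t, β s * (Gam K β s) ^ 2 * (angL K β ℓ s)⁻¹ ∂K.measure

/-!
Since `K` is continuous, the image of `dK` under `K` is Lebesgue measure, so `Γ_t`, `⟨L⟩_t` and
`ε_t^{(1)}` are the same functionals built from `K = id` and evaluated at `x = K_t`; there
`Γ(x) = exp (c/(1-r) ((1+x)^{1-r} - 1))` with `c = ab`, `d = aσ`. For `N(x) = Γ(x)² (1+x)^{-r} → ∞`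
one computes `⟨L⟩'/N' = d² / (2c - r (1+x)^{r-1}) → d²/(2c)`, so L'Hôpital's rule at `∞/∞` gives
`⟨L⟩/N → d²/(2c)`, which is (i). The integrand of `ε^{(1)}` is `c N/⟨L⟩ → 2c²/d²`, and L'Hôpital's
rule against `1 + x` gives (ii).
-/

theorem tendsto_div_of_tendsto_deriv_div_atTop {f g f' g' : ℝ → ℝ} {L : ℝ}
    (hf : ∀ᶠ x in atTop, HasDerivAt f (f' x) x) (hg : ∀ᶠ x in atTop, HasDerivAt g (g' x) x)
    (hg' : ∀ᶠ x in atTop, 0 < g' x) (hgtop : Tendsto g atTop atTop)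
    (hdiv : Tendsto (fun x => f' x / g' x) atTop (𝓝 L)) :
    Tendsto (fun x => f x / g x) atTop (𝓝 L) := by
  rw [Metric.tendsto_nhds]
  intro ε hε
  obtain ⟨x₀, hx₀⟩ := eventually_atTop.1 (hf.and (hg.and (hg'.and
    (hdiv.eventually (Metric.ball_mem_nhds L (half_pos hε))))))
  have hslope : ∀ x, x₀ < x → |f x - f x₀ - L * (g x - g x₀)| ≤ ε / 2 * |g x - g x₀| := by
    intro x hx
    have hcont : ∀ φ φ' : ℝ → ℝ, (∀ y, x₀ ≤ y → HasDerivAt φ (φ' y) y) →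
        ContinuousOn φ (Icc x₀ x) := fun φ φ' h y hy => (h y hy.1).continuousAt.continuousWithinAt
    obtain ⟨ξ, hξ, hmvt⟩ := exists_ratio_hasDerivAt_eq_ratio_slope f f' hx
      (hcont f f' fun y hy => (hx₀ y hy).1) (fun y hy => (hx₀ y hy.1.le).1)
      g g' (hcont g g' fun y hy => (hx₀ y hy).2.1) (fun y hy => (hx₀ y hy.1.le).2.1)
    obtain ⟨-, -, hgξ, hratio⟩ := hx₀ ξ hξ.1.le
    have hfg : f x - f x₀ - L * (g x - g x₀) = (f' ξ / g' ξ - L) * (g x - g x₀) := by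
      field_simp
      linear_combination -hmvt
    rw [hfg, abs_mul]
    exact mul_le_mul_of_nonneg_right (le_of_lt (by simpa [Real.dist_eq] using hratio)) (abs_nonneg _)
  have hsmall : Tendsto (fun x => (|f x₀ - L * g x₀| + ε / 2 * |g x₀|) / g x) atTop (𝓝 0) :=
    tendsto_const_nhds.div_atTop hgtop
  filter_upwards [eventually_gt_atTop x₀, hgtop.eventually_gt_atTop 0,
    hsmall.eventually (gt_mem_nhds (half_pos hε))] with x hx hgx hCx
  rw [div_lt_iff₀ hgx] at hCx
  rw [Real.dist_eq, show f x / g x - L = (f x - L * g x) / g x by field_simp, abs_div,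
    abs_of_pos hgx, div_lt_iff₀ hgx]
  have hg_diff : |g x - g x₀| ≤ g x + |g x₀| := (abs_sub _ _).trans_eq (by rw [abs_of_pos hgx])
  calc |f x - L * g x| = |(f x₀ - L * g x₀) + (f x - f x₀ - L * (g x - g x₀))| := by ring_nf
    _ ≤ |f x₀ - L * g x₀| + ε / 2 * (g x + |g x₀|) :=
        (abs_add_le _ _).trans (by gcongr; exact (hslope x hx).trans (by gcongr))
    _ < ε * g x := by linarith

namespace StieltjesFunction

variable {K : StieltjesFunction ℝ} {a b : ℝ}

theorem exists_preimage_Iic_inter_Ioc (hK : Continuous K) (hab : a ≤ b) {y : ℝ} (hy : K a ≤ y) :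
    ∃ u, K ⁻¹' Iic y ∩ Ioc a b = Ioc a u ∧ K u = min y (K b) := by
  set S := Icc a b ∩ K ⁻¹' Iic y
  have hbdd : BddAbove S := bddAbove_Icc.mono inter_subset_left
  have huS : sSup S ∈ S := (isClosed_Icc.inter (isClosed_Iic.preimage hK)).csSup_mem
    ⟨a, left_mem_Icc.2 hab, hy⟩ hbdd
  refine ⟨sSup S, ?_, le_antisymm (le_min huS.2 (K.mono huS.1.2)) ?_⟩
  · ext s
    constructor
    · rintro ⟨hs, hsa, hsb⟩
      exact ⟨hsa, le_csSup hbdd ⟨⟨hsa.le, hsb⟩, hs⟩⟩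
    · rintro ⟨hsa, hsu⟩
      exact ⟨(K.mono hsu).trans huS.2, hsa, hsu.trans huS.1.2⟩
  rcases le_total y (K b) with hyb | hby
  · obtain ⟨v, hv, hKv⟩ := intermediate_value_Icc hab hK.continuousOn ⟨hy, hyb⟩
    exact (min_le_left _ _).trans (hKv ▸ K.mono (le_csSup hbdd ⟨hv, hKv.le⟩))
  · rw [le_antisymm huS.1.2 (le_csSup hbdd ⟨right_mem_Icc.2 hab, hby⟩)]
    exact min_le_right _ _

theorem map_measure_restrict_Ioc (hK : Continuous K) (hab : a ≤ b) :
    (K.measure.restrict (Ioc a b)).map K = volume.restrict (Ioc (K a) (K b)) := by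
  refine (Measure.ext_of_Iic _ _ fun y => ?_).symm
  rw [Measure.map_apply hK.measurable measurableSet_Iic,
    Measure.restrict_apply (hK.measurable measurableSet_Iic),
    Measure.restrict_apply measurableSet_Iic, inter_comm, Ioc_inter_Iic, Real.volume_Ioc]
  rcases lt_or_ge y (K a) with hy | hy
  · have hempty : K ⁻¹' Iic y ∩ Ioc a b = ∅ :=
      eq_empty_of_forall_notMem fun s ⟨hs, hsa, _⟩ => (hy.trans_le (K.mono hsa.le)).not_ge hs
    rw [hempty, measure_empty, ENNReal.ofReal_eq_zero.2]
    linarith [min_le_right (K b) y]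
  · obtain ⟨u, hu, hKu⟩ := exists_preimage_Iic_inter_Ioc hK hab hy
    rw [hu, measure_Ioc, hKu, min_comm]

theorem setIntegral_Ioc_comp {E : Type*} [NormedAddCommGroup E] [NormedSpace ℝ E]
    (hK : Continuous K) (hab : a ≤ b) {f : ℝ → E}
    (hf : AEStronglyMeasurable f (volume.restrict (Ioc (K a) (K b)))) :
    ∫ s in Ioc a b, f (K s) ∂K.measure = ∫ u in Ioc (K a) (K b), f u := by
  rw [← map_measure_restrict_Ioc hK hab] at hf ⊢
  exact (integral_map hK.aemeasurable hf).symm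

end StieltjesFunction

section LebesgueTime

variable {f β ℓ : ℝ → ℝ}

theorem continuousOn_integral_Ioc_zero (hf : ContinuousOn f (Ici 0)) :
    ContinuousOn (fun x => ∫ u in Ioc 0 x, f u) (Ici 0) := by
  intro x hx
  have hIcc : Icc 0 (x + 1) ∈ 𝓝[Ici 0] x := by
    simpa [Ici_inter_Iic] using inter_mem_nhdsWithin (Ici (0 : ℝ)) (Iic_mem_nhds (lt_add_one x))
  exact (intervalIntegral.continuousOn_primitive ((hf.mono Icc_subset_Ici_self).integrableOn_Icc)
    x ⟨hx, by linarith⟩).mono_of_mem_nhdsWithin hIcc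

theorem hasDerivAt_integral_Ioc_zero (hf : ContinuousOn f (Ici 0)) {x : ℝ} (hx : 0 < x) :
    HasDerivAt (fun y => ∫ u in Ioc 0 y, f u) (f x) x := by
  refine (intervalIntegral.integral_hasDerivAt_right
    ((hf.mono Icc_subset_Ici_self).intervalIntegrable_of_Icc hx.le)
    ((hf.mono Ioi_subset_Ici_self).stronglyMeasurableAtFilter isOpen_Ioi x hx)
    (hf.continuousAt (Ici_mem_nhds hx))).congr_of_eventuallyEq ?_
  filter_upwards [Ioi_mem_nhds hx] with y hy
  exact (intervalIntegral.integral_of_le hy.le).symm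

theorem Gam_id (β : ℝ → ℝ) :
    Gam StieltjesFunction.id β = fun x => Real.exp (∫ u in Ioc 0 x, β u) := by
  ext x
  rw [Gam, ← Real.volume_eq_stieltjes_id]

theorem angL_id (β ℓ : ℝ → ℝ) :
    angL StieltjesFunction.id β ℓ =
      fun x => 1 + ∫ u in Ioc 0 x, Gam StieltjesFunction.id β u ^ 2 * ℓ u ^ 2 := by
  ext x
  rw [angL, ← Real.volume_eq_stieltjes_id]

theorem epsOne_id (β ℓ : ℝ → ℝ) :
    epsOne StieltjesFunction.id β ℓ = fun x =>
      1 + ∫ u in Ioc 0 x, β u * Gam StieltjesFunction.id β u ^ 2 *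
        (angL StieltjesFunction.id β ℓ u)⁻¹ := by
  ext x
  rw [epsOne, ← Real.volume_eq_stieltjes_id]

theorem Gam_pos (K : StieltjesFunction ℝ) (β : ℝ → ℝ) (t : ℝ) : 0 < Gam K β t :=
  Real.exp_pos _

theorem one_le_angL (K : StieltjesFunction ℝ) (β ℓ : ℝ → ℝ) (t : ℝ) : 1 ≤ angL K β ℓ t :=
  le_add_of_nonneg_right (setIntegral_nonneg measurableSet_Ioc fun _ _ => by positivity)

theorem continuousOn_Gam_id (hβ : ContinuousOn β (Ici 0)) :
    ContinuousOn (Gam StieltjesFunction.id β) (Ici 0) := by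
  rw [Gam_id]
  exact (continuousOn_integral_Ioc_zero hβ).rexp

theorem hasDerivAt_Gam_id (hβ : ContinuousOn β (Ici 0)) {x : ℝ} (hx : 0 < x) :
    HasDerivAt (Gam StieltjesFunction.id β) (Gam StieltjesFunction.id β x * β x) x := by
  rw [Gam_id]
  exact (hasDerivAt_integral_Ioc_zero hβ hx).exp

theorem continuousOn_angL_integrand (hβ : ContinuousOn β (Ici 0)) (hℓ : ContinuousOn ℓ (Ici 0)) :
    ContinuousOn (fun u => Gam StieltjesFunction.id β u ^ 2 * ℓ u ^ 2) (Ici 0) :=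
  ((continuousOn_Gam_id hβ).pow 2).mul (hℓ.pow 2)

theorem continuousOn_angL_id (hβ : ContinuousOn β (Ici 0)) (hℓ : ContinuousOn ℓ (Ici 0)) :
    ContinuousOn (angL StieltjesFunction.id β ℓ) (Ici 0) := by
  rw [angL_id]
  exact continuousOn_const.add (continuousOn_integral_Ioc_zero (continuousOn_angL_integrand hβ hℓ))

theorem hasDerivAt_angL_id (hβ : ContinuousOn β (Ici 0)) (hℓ : ContinuousOn ℓ (Ici 0)) {x : ℝ}
    (hx : 0 < x) :
    HasDerivAt (angL StieltjesFunction.id β ℓ) (Gam StieltjesFunction.id β x ^ 2 * ℓ x ^ 2) x := by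
  rw [angL_id]
  exact (hasDerivAt_integral_Ioc_zero (continuousOn_angL_integrand hβ hℓ) hx).const_add 1

theorem continuousOn_epsOne_integrand (hβ : ContinuousOn β (Ici 0)) (hℓ : ContinuousOn ℓ (Ici 0)) :
    ContinuousOn (fun u => β u * Gam StieltjesFunction.id β u ^ 2 *
      (angL StieltjesFunction.id β ℓ u)⁻¹) (Ici 0) :=
  (hβ.mul ((continuousOn_Gam_id hβ).pow 2)).mul ((continuousOn_angL_id hβ hℓ).inv₀
    fun u _ => (zero_lt_one.trans_le (one_le_angL _ β ℓ u)).ne')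

theorem hasDerivAt_epsOne_id (hβ : ContinuousOn β (Ici 0)) (hℓ : ContinuousOn ℓ (Ici 0)) {x : ℝ}
    (hx : 0 < x) :
    HasDerivAt (epsOne StieltjesFunction.id β ℓ)
      (β x * Gam StieltjesFunction.id β x ^ 2 * (angL StieltjesFunction.id β ℓ x)⁻¹) x := by
  rw [epsOne_id]
  exact (hasDerivAt_integral_Ioc_zero (continuousOn_epsOne_integrand hβ hℓ) hx).const_add 1

variable {K : StieltjesFunction ℝ} {t : ℝ}

theorem setIntegral_Ioc_zero_comp (hK : Continuous K) (hK0 : K 0 = 0)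
    (hf : ContinuousOn f (Ici 0)) (ht : 0 ≤ t) :
    ∫ s in Ioc 0 t, f (K s) ∂K.measure = ∫ u in Ioc 0 (K t), f u := by
  rw [K.setIntegral_Ioc_comp hK ht, hK0]
  rw [hK0]
  exact (hf.mono (Ioc_subset_Ioi_self.trans Ioi_subset_Ici_self)).aestronglyMeasurable
    measurableSet_Ioc

theorem Gam_comp (hK : Continuous K) (hK0 : K 0 = 0) (hβ : ContinuousOn β (Ici 0)) (ht : 0 ≤ t) :
    Gam K (fun s => β (K s)) t = Gam StieltjesFunction.id β (K t) := by
  rw [Gam, setIntegral_Ioc_zero_comp hK hK0 hβ ht, Gam_id]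

theorem angL_comp (hK : Continuous K) (hK0 : K 0 = 0) (hβ : ContinuousOn β (Ici 0))
    (hℓ : ContinuousOn ℓ (Ici 0)) (ht : 0 ≤ t) :
    angL K (fun s => β (K s)) (fun s => ℓ (K s)) t = angL StieltjesFunction.id β ℓ (K t) := by
  have hGam : EqOn (fun s => Gam K (fun s => β (K s)) s ^ 2 * ℓ (K s) ^ 2)
      (fun s => Gam StieltjesFunction.id β (K s) ^ 2 * ℓ (K s) ^ 2) (Ioc 0 t) :=
    fun s hs => by dsimp only; rw [Gam_comp hK hK0 hβ hs.1.le]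
  rw [angL, setIntegral_congr_fun measurableSet_Ioc hGam,
    setIntegral_Ioc_zero_comp hK hK0 (continuousOn_angL_integrand hβ hℓ) ht, angL_id]

theorem epsOne_comp (hK : Continuous K) (hK0 : K 0 = 0) (hβ : ContinuousOn β (Ici 0))
    (hℓ : ContinuousOn ℓ (Ici 0)) (ht : 0 ≤ t) :
    epsOne K (fun s => β (K s)) (fun s => ℓ (K s)) t =
      epsOne StieltjesFunction.id β ℓ (K t) := by
  have hGam : EqOn
      (fun s => β (K s) * Gam K (fun s => β (K s)) s ^ 2 *
        (angL K (fun s => β (K s)) (fun s => ℓ (K s)) s)⁻¹)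
      (fun s => β (K s) * Gam StieltjesFunction.id β (K s) ^ 2 *
        (angL StieltjesFunction.id β ℓ (K s))⁻¹) (Ioc 0 t) :=
    fun s hs => by dsimp only; rw [Gam_comp hK hK0 hβ hs.1.le, angL_comp hK hK0 hβ hℓ hs.1.le]
  rw [epsOne, setIntegral_congr_fun measurableSet_Ioc hGam,
    setIntegral_Ioc_zero_comp hK hK0 (continuousOn_epsOne_integrand hβ hℓ) ht, epsOne_id]

end LebesgueTime

noncomputable def powerGain (c r u : ℝ) : ℝ := c * (1 + u) ^ (-r)

theorem continuousOn_powerGain (c r : ℝ) : ContinuousOn (powerGain c r) (Ici 0) :=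
  continuousOn_const.mul ((continuousOn_id.const_add 1).rpow_const
    fun u hu => Or.inl (by rw [id]; linarith [mem_Ici.1 hu]))

section PowerGain

variable {c d r : ℝ}

theorem tendsto_one_add_atTop : Tendsto (fun x : ℝ => 1 + x) atTop atTop :=
  tendsto_atTop_add_const_left _ 1 tendsto_id

theorem integral_powerGain (hr : r < 1) {x : ℝ} (hx : 0 ≤ x) :
    ∫ u in Ioc 0 x, powerGain c r u = c / (1 - r) * ((1 + x) ^ (1 - r) - 1) := by
  rw [← intervalIntegral.integral_of_le hx]
  simp only [powerGain]
  rw [intervalIntegral.integral_const_mul, intervalIntegral.integral_comp_add_left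
    (fun u => u ^ (-r)), integral_rpow (Or.inl (by linarith)), show -r + 1 = 1 - r by ring,
    add_zero, Real.one_rpow]
  ring

theorem Gam_id_powerGain (hr : r < 1) {x : ℝ} (hx : 0 ≤ x) :
    Gam StieltjesFunction.id (powerGain c r) x =
      Real.exp (c / (1 - r) * ((1 + x) ^ (1 - r) - 1)) := by
  simp only [Gam_id, integral_powerGain hr hx]

theorem tendsto_Gam_sq_mul_rpow_atTop (hc : 0 < c) (hr : r < 1) :
    Tendsto (fun x => Gam StieltjesFunction.id (powerGain c r) x ^ 2 * (1 + x) ^ (-r))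
      atTop atTop := by
  have hb : 0 < 2 * c / (1 - r) := div_pos (by positivity) (by linarith)
  have hy : Tendsto (fun x : ℝ => (1 + x) ^ (1 - r)) atTop atTop :=
    (tendsto_rpow_atTop (by linarith)).comp tendsto_one_add_atTop
  refine ((tendsto_exp_mul_div_rpow_atTop (r / (1 - r)) _ hb |>.comp hy).const_mul_atTop
    (Real.exp_pos (-(2 * c / (1 - r))))).congr' ?_
  filter_upwards [eventually_ge_atTop 0] with x hx
  have h1x : 0 < 1 + x := by linarith
  rw [Function.comp_apply, Gam_id_powerGain hr hx, ← Real.rpow_mul h1x.le,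
    mul_div_cancel₀ _ (by linarith : (1 : ℝ) - r ≠ 0), Real.rpow_neg h1x.le, ← Real.exp_nat_mul,
    mul_div_assoc', ← Real.exp_add, div_eq_mul_inv]
  congr 2
  push_cast
  ring

theorem hasDerivAt_Gam_sq_mul_rpow {x : ℝ} (hx : 0 < x) :
    HasDerivAt (fun x => Gam StieltjesFunction.id (powerGain c r) x ^ 2 * (1 + x) ^ (-r))
      (Gam StieltjesFunction.id (powerGain c r) x ^ 2 * ((1 + x) ^ (-r)) ^ 2 *
        (2 * c - r * (1 + x) ^ (r - 1))) x := by
  have h1x : 0 < 1 + x := by linarith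
  have hpow : HasDerivAt (fun x => (1 + x) ^ (-r)) (-r * (1 + x) ^ (-r - 1)) x := by
    simpa using ((hasDerivAt_id x).const_add 1).rpow_const (p := -r) (Or.inl h1x.ne')
  have hsplit : (1 + x) ^ (-r - 1) = ((1 + x) ^ (-r)) ^ 2 * (1 + x) ^ (r - 1) := by
    rw [sq, ← Real.rpow_add h1x, ← Real.rpow_add h1x]
    ring_nf
  refine (((hasDerivAt_Gam_id (continuousOn_powerGain c r) hx).pow 2).mul hpow).congr_deriv ?_
  rw [hsplit, powerGain, Pi.pow_apply]
  ring

theorem tendsto_angL_div_Gam_sq_mul_rpow (hc : 0 < c) (hr : r < 1) :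
    Tendsto (fun x => angL StieltjesFunction.id (powerGain c r) (powerGain d r) x /
      (Gam StieltjesFunction.id (powerGain c r) x ^ 2 * (1 + x) ^ (-r)))
      atTop (𝓝 (d ^ 2 / (2 * c))) := by
  have hw : Tendsto (fun x : ℝ => 2 * c - r * (1 + x) ^ (r - 1)) atTop (𝓝 (2 * c)) := by
    have h0 : Tendsto (fun x : ℝ => (1 + x) ^ (r - 1)) atTop (𝓝 0) := by
      rw [← neg_sub 1 r]
      exact (tendsto_rpow_neg_atTop (by linarith)).comp tendsto_one_add_atTop
    simpa using tendsto_const_nhds.sub (h0.const_mul r)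
  have hw_pos : ∀ᶠ x in atTop, 0 < 2 * c - r * (1 + x) ^ (r - 1) :=
    hw.eventually (eventually_gt_nhds (by positivity))
  refine tendsto_div_of_tendsto_deriv_div_atTop
    ((eventually_gt_atTop 0).mono fun x hx => hasDerivAt_angL_id (continuousOn_powerGain c r)
      (continuousOn_powerGain d r) hx)
    ((eventually_gt_atTop 0).mono fun x hx => hasDerivAt_Gam_sq_mul_rpow hx)
    ?_ (tendsto_Gam_sq_mul_rpow_atTop hc hr) ?_
  · filter_upwards [hw_pos, eventually_gt_atTop 0] with x hw hx
    have := Gam_pos StieltjesFunction.id (powerGain c r) x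
    have : 0 < 1 + x := by linarith
    positivity
  · refine (tendsto_const_nhds.div hw (by positivity)).congr' ?_
    filter_upwards [hw_pos, eventually_gt_atTop 0] with x hw hx
    have := Gam_pos StieltjesFunction.id (powerGain c r) x
    have : 0 < 1 + x := by linarith
    rw [Pi.div_apply, powerGain]
    field_simp

theorem tendsto_Gam_sq_div_angL_mul_rpow (hc : 0 < c) (hd : d ≠ 0) (hr : r < 1) :
    Tendsto (fun x => Gam StieltjesFunction.id (powerGain c r) x ^ 2 /
      (angL StieltjesFunction.id (powerGain c r) (powerGain d r) x * (1 + x) ^ r))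
      atTop (𝓝 (2 * c / d ^ 2)) := by
  have h := (tendsto_angL_div_Gam_sq_mul_rpow (d := d) hc hr).inv₀ (by positivity)
  rw [inv_div] at h
  refine h.congr' ?_
  filter_upwards [eventually_ge_atTop 0] with x hx
  rw [Real.rpow_neg (by linarith), inv_div]
  ring

theorem tendsto_epsOne_div_one_add (hc : 0 < c) (hd : d ≠ 0) (hr : r < 1) :
    Tendsto (fun x => epsOne StieltjesFunction.id (powerGain c r) (powerGain d r) x / (1 + x))
      atTop (𝓝 (2 * c ^ 2 / d ^ 2)) := by
  have h := ((tendsto_angL_div_Gam_sq_mul_rpow (d := d) hc hr).inv₀ (by positivity)).const_mul c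
  rw [show c * (d ^ 2 / (2 * c))⁻¹ = 2 * c ^ 2 / d ^ 2 by field_simp] at h
  refine tendsto_div_of_tendsto_deriv_div_atTop (g' := fun _ => 1)
    ((eventually_gt_atTop 0).mono fun x hx => hasDerivAt_epsOne_id (continuousOn_powerGain c r)
      (continuousOn_powerGain d r) hx)
    (Eventually.of_forall fun x => (hasDerivAt_id x).const_add 1)
    (Eventually.of_forall fun _ => one_pos) tendsto_one_add_atTop (h.congr fun x => ?_)
  rw [div_one, inv_div, powerGain]
  ring

end PowerGain

theorem slowly_varying_gain_limits_general (K : StieltjesFunction ℝ)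
    (hKc : Continuous fun x => K x) (hK0 : K 0 = 0)
    (hKtop : Tendsto (fun t => K t) atTop atTop)
    (a b σ r : ℝ) (ha : 0 < a) (hb : 0 < b) (hσ : 0 < σ) (hr2 : r < 1) :
    Tendsto (fun t =>
        (Gam K (fun s => a * b * (1 + K s) ^ (-r)) t) ^ 2 /
          (angL K (fun s => a * b * (1 + K s) ^ (-r))
              (fun s => a * σ * (1 + K s) ^ (-r)) t * (1 + K t) ^ r))
      atTop (𝓝 (2 * b / (a * σ ^ 2))) ∧
    Tendsto (fun t =>
        epsOne K (fun s => a * b * (1 + K s) ^ (-r))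
            (fun s => a * σ * (1 + K s) ^ (-r)) t / (1 + K t))
      atTop (𝓝 (2 * b ^ 2 / σ ^ 2)) := by
  have hβ := continuousOn_powerGain (a * b) r
  have hℓ := continuousOn_powerGain (a * σ) r
  have hc : 0 < a * b := mul_pos ha hb
  have hd : a * σ ≠ 0 := by positivity
  constructor
  · have h := (tendsto_Gam_sq_div_angL_mul_rpow hc hd hr2).comp hKtop
    rw [show 2 * (a * b) / (a * σ) ^ 2 = 2 * b / (a * σ ^ 2) by field_simp] at h
    refine h.congr' ((eventually_ge_atTop 0).mono fun t ht => ?_)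
    rw [Function.comp_apply, ← Gam_comp hKc hK0 hβ ht, ← angL_comp hKc hK0 hβ hℓ ht]
    rfl
  · have h := (tendsto_epsOne_div_one_add hc hd hr2).comp hKtop
    rw [show 2 * (a * b) ^ 2 / (a * σ) ^ 2 = 2 * b ^ 2 / σ ^ 2 by field_simp] at h
    refine h.congr' ((eventually_ge_atTop 0).mono fun t ht => ?_)
    rw [Function.comp_apply, ← epsOne_comp hKc hK0 hβ hℓ ht]
    rfl

/-- Example 2 of Section 3 ("linear procedure with slowly varying gains"): with
`β_t = a·b·(1+K_t)^{−r}`, `ℓ_t = a·σ·(1+K_t)^{−r}` for `a, b, σ > 0`, `1/2 < r < 1` and `K`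
continuous nondecreasing with `K_0 = 0`, `K_t → ∞`, one has
(i) `Γ_t² / (⟨L⟩_t (1+K_t)^r) → 2b/(aσ²)` and (ii) `ε_t^{(1)} / (1+K_t) → 2b²/σ²`. -/
theorem slowly_varying_gain_limits (K : StieltjesFunction ℝ)
    (hKc : Continuous fun x => K x) (hK0 : K 0 = 0)
    (hKtop : Tendsto (fun t => K t) atTop atTop)
    (a b σ r : ℝ) (ha : 0 < a) (hb : 0 < b) (hσ : 0 < σ) (hr1 : 1 / 2 < r) (hr2 : r < 1) :
    Tendsto (fun t =>
        (Gam K (fun s => a * b * (1 + K s) ^ (-r)) t) ^ 2 /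
          (angL K (fun s => a * b * (1 + K s) ^ (-r))
              (fun s => a * σ * (1 + K s) ^ (-r)) t * (1 + K t) ^ r))
      atTop (𝓝 (2 * b / (a * σ ^ 2))) ∧
    Tendsto (fun t =>
        epsOne K (fun s => a * b * (1 + K s) ^ (-r))
            (fun s => a * σ * (1 + K s) ^ (-r)) t / (1 + K t))
      atTop (𝓝 (2 * b ^ 2 / σ ^ 2)) :=
  slowly_varying_gain_limits_general K hKc hK0 hKtop a b σ r ha hb hσ hr2
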